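/- Let G be a G-metric on a nonempty set X and let T : X → X satisfy: (I) for all x ∈ X, if Tx ≠ x then T(Tx) ≠ x, and (II) there exists λ ∈ (0,1) such that G(Tx,Ty,Tz) ≤ λ·G(x,y,z) for all pairwise distinct points x, y, z ∈ X. Let u₀ ∈ X and let the Picard sequence be defined by u_{n+1} = T u_n for n ≥ 0, and assume u_n ≠ u_{n+1} for all n ≥ 0. Then for every n ≥ 0 the points u_n, u_{n+1}, u_{n+2} are pairwise distinct, G(u_n, u_{n+1}, u_{n+2}) ≤ λⁿ·G(u₀,u₁,u₂), for all m > n ≥ 0 one has G(u_n, u_m, u_m) ≤ (λⁿ/(1−λ))·G(u₀,u₁,u₂), and consequently {u_n} is a G-Cauchy sequence. -/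

import Mathlib

/-!
Condition (I) makes `u n, u (n+1), u (n+2)` pairwise distinct, so (II) applies along the
Picard sequence and contracts consecutive triples geometrically. By (P4) the step values
`G (u k) (u (k+1)) (u (k+1))` are dominated by the triple values, and (P5) sums them to a
geometric tail. Since `G x y y ≤ 2 G y x x`, the bound for `n < m` controls both orders of
the indices, which gives the Cauchy property.
-/

open Filter

/-- A G-metric on `X` in the sense of Mustafa and Sims: (P1) `G x y z = 0` iff `x = y = z`;
(P2) `G x x y > 0` if `x ≠ y`; (P3) invariance under all permutations of the arguments
(generated by the two swaps below); (P4) `G x x y ≤ G x y z` if `y ≠ z`;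
(P5) `G x y z ≤ G x w w + G w y z`. The codomain is `[0, ∞)`, encoded by `nonneg`. -/
structure IsGMetric {X : Type*} (G : X → X → X → ℝ) : Prop where
  nonneg : ∀ x y z, 0 ≤ G x y z
  eq_zero_iff : ∀ x y z, G x y z = 0 ↔ x = y ∧ y = z
  pos_of_ne : ∀ x y, x ≠ y → 0 < G x x y
  swap_left : ∀ x y z, G x y z = G y x z
  swap_right : ∀ x y z, G x y z = G x z y
  le_of_ne : ∀ x y z, y ≠ z → G x x y ≤ G x y z
  triangle : ∀ x y z w, G x y z ≤ G x w w + G w y z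

/-- A sequence `u` is `G`-Cauchy if `G (u n) (u m) (u m) → 0` as `n, m → ∞`. -/
def GCauchy {X : Type*} (G : X → X → X → ℝ) (u : ℕ → X) : Prop :=
  Tendsto (fun p : ℕ × ℕ => G (u p.1) (u p.2) (u p.2)) atTop (nhds 0)

/-- A sequence `u` is `G`-convergent to `x` if `G (u n) x x → 0` as `n → ∞`. -/
def GConvergent {X : Type*} (G : X → X → X → ℝ) (u : ℕ → X) (x : X) : Prop :=
  Tendsto (fun n => G (u n) x x) atTop (nhds 0)

/-- `(X, G)` is complete if every `G`-Cauchy sequence is `G`-convergent to some point. -/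
def GComplete {X : Type*} (G : X → X → X → ℝ) : Prop :=
  ∀ u : ℕ → X, GCauchy G u → ∃ x, GConvergent G u x

open Finset Topology

namespace IsGMetric

variable {X : Type*} {G : X → X → X → ℝ}

theorem self_eq_zero (hG : IsGMetric G) (x : X) : G x x x = 0 :=
  (hG.eq_zero_iff x x x).2 ⟨rfl, rfl⟩

theorem rotate (hG : IsGMetric G) (x y z : X) : G x y z = G y z x := by
  rw [hG.swap_left, hG.swap_right]

theorem le_of_ne_left (hG : IsGMetric G) {x z : X} (y : X) (h : x ≠ z) :
    G x y y ≤ G x y z := by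
  rw [hG.rotate, hG.swap_left x]
  exact hG.le_of_ne y x z h

theorem le_two_mul_swap (hG : IsGMetric G) (x y : X) : G x y y ≤ 2 * G y x x := by
  have h := hG.triangle y y x x
  rw [← hG.rotate x y y, hG.swap_left x y x] at h
  linarith

theorem le_sum_Ico (hG : IsGMetric G) (u : ℕ → X) {n m : ℕ} (h : n ≤ m) :
    G (u n) (u m) (u m) ≤ ∑ k ∈ Ico n m, G (u k) (u (k + 1)) (u (k + 1)) := by
  induction m, h using Nat.le_induction with
  | base => rw [Ico_self, sum_empty, hG.self_eq_zero]
  | succ m hnm ih =>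
    rw [sum_Ico_succ_top hnm]
    linarith [hG.triangle (u n) (u (m + 1)) (u (m + 1)) (u m)]

theorem le_geometric_of_step_le (hG : IsGMetric G) {u : ℕ → X} {lam c : ℝ}
    (hlam0 : 0 ≤ lam) (hlam1 : lam < 1)
    (hstep : ∀ k, G (u k) (u (k + 1)) (u (k + 1)) ≤ lam ^ k * c) {n m : ℕ} (h : n ≤ m) :
    G (u n) (u m) (u m) ≤ lam ^ n / (1 - lam) * c := by
  have hc : 0 ≤ c := by simpa using (hG.nonneg _ _ _).trans (hstep 0)
  calc G (u n) (u m) (u m)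
      ≤ ∑ k ∈ Ico n m, G (u k) (u (k + 1)) (u (k + 1)) := hG.le_sum_Ico u h
    _ ≤ ∑ k ∈ Ico n m, lam ^ k * c := sum_le_sum fun k _ => hstep k
    _ = (∑ k ∈ Ico n m, lam ^ k) * c := (sum_mul _ _ _).symm
    _ ≤ lam ^ n / (1 - lam) * c :=
      mul_le_mul_of_nonneg_right (geom_sum_Ico_le_of_lt_one hlam0 hlam1) hc

theorem gCauchy_of_le (hG : IsGMetric G) {u : ℕ → X} {a : ℕ → ℝ}
    (ha : Tendsto a atTop (𝓝 0)) (hle : ∀ n m, n < m → G (u n) (u m) (u m) ≤ a n) :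
    GCauchy G u := by
  have ha0 : ∀ n, 0 ≤ a n := fun n => (hG.nonneg _ _ _).trans (hle n (n + 1) n.lt_succ_self)
  have hbound : ∀ n m, G (u n) (u m) (u m) ≤ 2 * a (min n m) := by
    intro n m
    rcases lt_trichotomy n m with h | rfl | h
    · rw [min_eq_left h.le]
      linarith [hle n m h, ha0 n]
    · rw [hG.self_eq_zero, min_self]
      linarith [ha0 n]
    · rw [min_eq_right h.le]
      linarith [hG.le_two_mul_swap (u n) (u m), hle m n h]
  have hmin : Tendsto (fun p : ℕ × ℕ => min p.1 p.2) atTop atTop := by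
    rw [← prod_atTop_atTop_eq]
    exact tendsto_inf_atTop _ tendsto_fst tendsto_snd
  have hlim := (ha.const_mul 2).comp hmin
  rw [mul_zero] at hlim
  exact squeeze_zero (fun _ => hG.nonneg _ _ _) (fun p => hbound p.1 p.2) hlim

end IsGMetric

section Picard

variable {X : Type*} {G : X → X → X → ℝ} {T : X → X} {u : ℕ → X}

theorem picard_ne_add_two (hI : ∀ x : X, T x ≠ x → T (T x) ≠ x)
    (hu : ∀ n, u (n + 1) = T (u n)) (hne : ∀ n, u n ≠ u (n + 1)) (n : ℕ) :
    u n ≠ u (n + 2) := by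
  have h := hI (u n) (hu n ▸ (hne n).symm)
  rw [← hu n, ← hu (n + 1)] at h
  exact h.symm

theorem picard_triple_le {lam : ℝ} (hlam0 : 0 ≤ lam)
    (hI : ∀ x : X, T x ≠ x → T (T x) ≠ x)
    (hII : ∀ x y z : X, x ≠ y → x ≠ z → y ≠ z → G (T x) (T y) (T z) ≤ lam * G x y z)
    (hu : ∀ n, u (n + 1) = T (u n)) (hne : ∀ n, u n ≠ u (n + 1)) (n : ℕ) :
    G (u n) (u (n + 1)) (u (n + 2)) ≤ lam ^ n * G (u 0) (u 1) (u 2) := by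
  induction n with
  | zero => simp
  | succ n ih =>
    have h := hII _ _ _ (hne n) (picard_ne_add_two hI hu hne n) (hne (n + 1))
    rw [← hu n, ← hu (n + 1), ← hu (n + 2)] at h
    calc G (u (n + 1)) (u (n + 2)) (u (n + 3))
        ≤ lam * G (u n) (u (n + 1)) (u (n + 2)) := h
      _ ≤ lam * (lam ^ n * G (u 0) (u 1) (u 2)) := mul_le_mul_of_nonneg_left ih hlam0
      _ = lam ^ (n + 1) * G (u 0) (u 1) (u 2) := by ring

end Picard

theorem picard_estimates_banach_general {X : Type*}
    (G : X → X → X → ℝ) (hG : IsGMetric G)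
    (T : X → X)
    (hI : ∀ x : X, T x ≠ x → T (T x) ≠ x)
    (lam : ℝ) (hlam0 : 0 < lam) (hlam1 : lam < 1)
    (hII : ∀ x y z : X, x ≠ y → x ≠ z → y ≠ z →
      G (T x) (T y) (T z) ≤ lam * G x y z)
    (u : ℕ → X) (hu : ∀ n : ℕ, u (n + 1) = T (u n))
    (hne : ∀ n : ℕ, u n ≠ u (n + 1)) :
    (∀ n : ℕ, u n ≠ u (n + 1) ∧ u n ≠ u (n + 2) ∧ u (n + 1) ≠ u (n + 2)) ∧
    (∀ n : ℕ, G (u n) (u (n + 1)) (u (n + 2)) ≤ lam ^ n * G (u 0) (u 1) (u 2)) ∧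
    (∀ m n : ℕ, n < m →
      G (u n) (u m) (u m) ≤ lam ^ n / (1 - lam) * G (u 0) (u 1) (u 2)) ∧
    GCauchy G u := by
  have hne2 := picard_ne_add_two hI hu hne
  have htriple := picard_triple_le hlam0.le hI hII hu hne
  have hchain : ∀ m n : ℕ, n < m →
      G (u n) (u m) (u m) ≤ lam ^ n / (1 - lam) * G (u 0) (u 1) (u 2) :=
    fun m n h => hG.le_geometric_of_step_le hlam0.le hlam1
      (fun k => (hG.le_of_ne_left _ (hne2 k)).trans (htriple k)) h.le
  have hlim : Tendsto (fun n => lam ^ n / (1 - lam) * G (u 0) (u 1) (u 2)) atTop (𝓝 0) := by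
    simpa using ((tendsto_pow_atTop_nhds_zero_of_lt_one hlam0.le hlam1).div_const
      (1 - lam)).mul_const (G (u 0) (u 1) (u 2))
  exact ⟨fun n => ⟨hne n, hne2 n, hne (n + 1)⟩, htriple, hchain,
    hG.gCauchy_of_le hlim fun n m h => hchain m n h⟩

/-- Picard sequence estimates for the Banach-type contraction on pairwise distinct triples:
consecutive triples are pairwise distinct, `G (u n) (u (n+1)) (u (n+2)) ≤ λⁿ G(u₀,u₁,u₂)`,
`G (u n) (u m) (u m) ≤ (λⁿ/(1-λ)) G(u₀,u₁,u₂)` for `m > n`, and `u` is G-Cauchy. -/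
theorem picard_estimates_banach {X : Type*} [Nonempty X]
    (G : X → X → X → ℝ) (hG : IsGMetric G)
    (T : X → X)
    (hI : ∀ x : X, T x ≠ x → T (T x) ≠ x)
    (lam : ℝ) (hlam0 : 0 < lam) (hlam1 : lam < 1)
    (hII : ∀ x y z : X, x ≠ y → x ≠ z → y ≠ z →
      G (T x) (T y) (T z) ≤ lam * G x y z)
    (u : ℕ → X) (hu : ∀ n : ℕ, u (n + 1) = T (u n))
    (hne : ∀ n : ℕ, u n ≠ u (n + 1)) :
    (∀ n : ℕ, u n ≠ u (n + 1) ∧ u n ≠ u (n + 2) ∧ u (n + 1) ≠ u (n + 2)) ∧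
    (∀ n : ℕ, G (u n) (u (n + 1)) (u (n + 2)) ≤ lam ^ n * G (u 0) (u 1) (u 2)) ∧
    (∀ m n : ℕ, n < m →
      G (u n) (u m) (u m) ≤ lam ^ n / (1 - lam) * G (u 0) (u 1) (u 2)) ∧
    GCauchy G u :=
  picard_estimates_banach_general G hG T hI lam hlam0 hlam1 hII u hu hne
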